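/- arXiv:2403.02433 — 3 statements merged into one kernel-verified Lean document; each statement's English description precedes it below -/
import Mathlib

section
/- For every integer N ≥ 1, the number of parent functions on [N] satisfying condition (P3) equals the (N−1)-th Catalan number; that is, #(𝒫_N) = C_{N−1} = (1/N)·binom(2N−2, N−1). -/
/-!
Let `P` be a (P3) parent function on `[N + 1]`, `N ≥ 1`, and `m = P(1)`. Condition (P3) for
`i = 1` puts the parent of every `i ∈ [2, m - 1]` into `[i + 1, m]`, while every `i ≥ m` has its
parent in `[i + 1, N + 1]`. So `P` restricts to (P3) parent functions on the blocks `{2, …, m}`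
and `{m, …, N + 1}` (the shared element `m` is the root of the first block), and conversely any
two such functions glue back together along `P(1) = m`. Hence the numbers of (P3) parent
functions satisfy the Catalan recurrence.
-/

/-- A parent function on `[N] = {1, …, N}`, modeled 0-indexed on `Fin N`
(index `i : Fin N` corresponds to the book `i + 1`): `P(i) > i` for all
`1 ≤ i ≤ N - 1` and `P(N) = N`. -/
def IsParentFn (N : ℕ) (P : Fin N → Fin N) : Prop :=
  (∀ i : Fin N, (i : ℕ) + 1 < N → i < P i) ∧
  (∀ i : Fin N, (i : ℕ) + 1 = N → P i = i)

/-- Condition (P3): for every pair `1 ≤ i < j ≤ N`, if `j < P(i)` then `P(j) ≤ P(i)`. -/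
def CondP3 (N : ℕ) (P : Fin N → Fin N) : Prop :=
  ∀ i j : Fin N, i < j → j < P i → P j ≤ P i

abbrev P3ParentFn (N : ℕ) : Type := {P : Fin N → Fin N // IsParentFn N P ∧ CondP3 N P}

theorem IsParentFn.le_apply {N : ℕ} {P : Fin N → Fin N} (hP : IsParentFn N P) (i : Fin N) :
    i ≤ P i := by
  rcases Nat.lt_or_ge ((i : ℕ) + 1) N with hi | hi
  · exact (hP.1 i hi).le
  · exact (hP.2 i (by omega)).ge

section Glue

variable {N k : ℕ} (hk : k < N) (Q : Fin (k + 1) → Fin (k + 1)) (R : Fin (N - k) → Fin (N - k))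

/-- Zero-indexed, `P 0 = k + 1`: `Q` is placed on `{1, …, k + 1}` and `R` on `{k + 1, …, N}`; at
the shared element `k + 1` the value comes from `R`, the value of `Q` there being its root. -/
def glue : Fin (N + 1) → Fin (N + 1) := fun i =>
  if h0 : (i : ℕ) = 0 then ⟨k + 1, by omega⟩
  else if hi : (i : ℕ) ≤ k then
    ⟨Q ⟨i - 1, by omega⟩ + 1, by have := (Q ⟨i - 1, by omega⟩).isLt; omega⟩
  else ⟨R ⟨i - (k + 1), by omega⟩ + (k + 1), by have := (R ⟨i - (k + 1), by omega⟩).isLt; omega⟩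

theorem glue_cases (i : Fin (N + 1)) :
    ((i : ℕ) = 0 ∧ (glue hk Q R i : ℕ) = k + 1) ∨
    (∃ j : Fin (k + 1), (j : ℕ) < k ∧ (i : ℕ) = j + 1 ∧ (glue hk Q R i : ℕ) = Q j + 1) ∨
    (∃ j : Fin (N - k), (i : ℕ) = j + (k + 1) ∧ (glue hk Q R i : ℕ) = R j + (k + 1)) := by
  unfold glue
  split_ifs with h0 hi
  · exact .inl ⟨h0, rfl⟩
  · exact .inr <| .inl ⟨⟨i - 1, by omega⟩, by simp only; omega, by simp only; omega, rfl⟩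
  · exact .inr <| .inr ⟨⟨i - (k + 1), by omega⟩, by simp only; omega, rfl⟩

theorem glue_val_zero : (glue hk Q R 0 : ℕ) = k + 1 := rfl

theorem glue_val_left {j : Fin (k + 1)} (hj : (j : ℕ) < k) :
    (glue hk Q R ⟨j + 1, by omega⟩ : ℕ) = Q j + 1 := by
  simp [glue, Nat.succ_le_of_lt hj]

theorem glue_val_right (j : Fin (N - k)) :
    (glue hk Q R ⟨j + (k + 1), by omega⟩ : ℕ) = R j + (k + 1) := by
  simp [glue, show ¬ ((j : ℕ) + (k + 1) ≤ k) by omega]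

variable {Q R}

theorem eq_of_glue_eq {Q' : Fin (k + 1) → Fin (k + 1)} {R' : Fin (N - k) → Fin (N - k)}
    (hQ : IsParentFn (k + 1) Q) (hQ' : IsParentFn (k + 1) Q') (h : glue hk Q R = glue hk Q' R') :
    Q = Q' ∧ R = R' := by
  refine ⟨funext fun j => ?_, funext fun j => ?_⟩
  · by_cases hj : (j : ℕ) < k
    · have := congrArg Fin.val (congrFun h ⟨j + 1, by omega⟩)
      rw [glue_val_left _ _ _ hj, glue_val_left _ _ _ hj] at this
      exact Fin.ext (by omega)
    · rw [hQ.2 j (by omega), hQ'.2 j (by omega)]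
  · have := congrArg Fin.val (congrFun h ⟨j + (k + 1), by omega⟩)
    rw [glue_val_right, glue_val_right] at this
    exact Fin.ext (by omega)

theorem isParentFn_glue (hQ : IsParentFn (k + 1) Q) (hR : IsParentFn (N - k) R) :
    IsParentFn (N + 1) (glue hk Q R) := by
  refine ⟨fun i hi => ?_, fun i hi => ?_⟩
  · rcases glue_cases hk Q R i with ⟨hi0, hgi⟩ | ⟨j, hjk, hij, hgi⟩ | ⟨j, hij, hgi⟩
    · omega
    · have := hQ.1 j (by omega); omega
    · have := hR.1 j (by omega); omega
  · rcases glue_cases hk Q R i with ⟨hi0, -⟩ | ⟨j, hjk, hij, -⟩ | ⟨j, hij, hgi⟩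
    · omega
    · omega
    · have := hR.2 j (by omega); ext; omega

theorem condP3_glue (hQ : CondP3 (k + 1) Q) (hR : CondP3 (N - k) R) :
    CondP3 (N + 1) (glue hk Q R) := by
  intro i i' hii' hi'
  rcases glue_cases hk Q R i with ⟨hi0, hgi⟩ | ⟨j, hjk, hij, hgi⟩ | ⟨j, hij, hgi⟩ <;>
  rcases glue_cases hk Q R i' with ⟨hi0', hgi'⟩ | ⟨j', hjk', hij', hgi'⟩ | ⟨j', hij', hgi'⟩
  all_goals first
    | omega
    | have := hQ j j' (by omega) (by omega); omega
    | have := hR j j' (by omega) (by omega); omega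

end Glue

section Blocks

def upperBlock {N : ℕ} (P : Fin (N + 1) → Fin (N + 1)) (k : ℕ) : Fin (N - k) → Fin (N - k) :=
  fun j => ⟨P ⟨j + (k + 1), by omega⟩ - (k + 1), by
    have := (P ⟨j + (k + 1), by omega⟩).isLt; have := j.isLt; omega⟩

variable {N k : ℕ} {P : Fin (N + 1) → Fin (N + 1)}

theorem val_apply_succ_le_of_condP3 (hP : CondP3 (N + 1) P) (hP0 : (P 0 : ℕ) = k + 1)
    {j : ℕ} (hj : j < k) : (P ⟨j + 1, by omega⟩ : ℕ) ≤ k + 1 := by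
  have := hP 0 ⟨j + 1, by omega⟩ (by simp [Fin.lt_def]) (by simp [Fin.lt_def]; omega)
  simpa [Fin.le_def, hP0] using this

def lowerBlock (hP : CondP3 (N + 1) P) (hP0 : (P 0 : ℕ) = k + 1) : Fin (k + 1) → Fin (k + 1) :=
  fun j => if hj : (j : ℕ) < k then
    ⟨P ⟨j + 1, by omega⟩ - 1, by have := val_apply_succ_le_of_condP3 hP hP0 hj; omega⟩
  else j

theorem lowerBlock_val (hP : CondP3 (N + 1) P) (hP0 : (P 0 : ℕ) = k + 1) {j : Fin (k + 1)}
    (hj : (j : ℕ) < k) : (lowerBlock hP hP0 j : ℕ) = P ⟨j + 1, by omega⟩ - 1 := by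
  simp [lowerBlock, hj]

theorem lowerBlock_of_not_lt (hP : CondP3 (N + 1) P) (hP0 : (P 0 : ℕ) = k + 1) {j : Fin (k + 1)}
    (hj : ¬ (j : ℕ) < k) : lowerBlock hP hP0 j = j := by
  simp [lowerBlock, hj]

theorem isParentFn_lowerBlock (hP : IsParentFn (N + 1) P) (hP' : CondP3 (N + 1) P)
    (hP0 : (P 0 : ℕ) = k + 1) : IsParentFn (k + 1) (lowerBlock hP' hP0) := by
  refine ⟨fun j hj => ?_, fun j hj => lowerBlock_of_not_lt hP' hP0 (by omega)⟩
  have := hP.1 ⟨j + 1, by omega⟩ (by simp; omega)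
  rw [Fin.lt_def, lowerBlock_val hP' hP0 (by omega)]
  simp only [Fin.lt_def] at this
  omega

theorem condP3_lowerBlock (hP : CondP3 (N + 1) P) (hP0 : (P 0 : ℕ) = k + 1) :
    CondP3 (k + 1) (lowerBlock hP hP0) := by
  intro a b hab hb
  by_cases ha : (a : ℕ) < k
  · rw [Fin.lt_def, lowerBlock_val hP hP0 ha] at hb
    by_cases hb' : (b : ℕ) < k
    · have := hP ⟨a + 1, by omega⟩ ⟨b + 1, by omega⟩ (Fin.mk_lt_mk.2 (by omega))
        (by rw [Fin.lt_def]; dsimp only; omega)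
      rw [Fin.le_def, lowerBlock_val hP hP0 ha, lowerBlock_val hP hP0 hb']
      simp only [Fin.le_def] at this
      omega
    · have := val_apply_succ_le_of_condP3 hP hP0 ha; omega
  · rw [lowerBlock_of_not_lt hP hP0 ha] at hb; omega

theorem isParentFn_upperBlock (hP : IsParentFn (N + 1) P) :
    IsParentFn (N - k) (upperBlock P k) := by
  refine ⟨fun j hj => ?_, fun j hj => ?_⟩
  · have := hP.1 ⟨j + (k + 1), by omega⟩ (by dsimp only; omega)
    rw [Fin.lt_def] at this ⊢
    dsimp only [upperBlock] at this ⊢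
    omega
  · have := congrArg Fin.val (hP.2 ⟨j + (k + 1), by omega⟩ (by dsimp only; omega))
    ext
    dsimp only [upperBlock] at this ⊢
    omega

theorem condP3_upperBlock (hP : CondP3 (N + 1) P) : CondP3 (N - k) (upperBlock P k) := by
  intro a b hab hb
  have := hP ⟨a + (k + 1), by omega⟩ ⟨b + (k + 1), by omega⟩ (Fin.mk_lt_mk.2 (by omega))
    (by rw [Fin.lt_def] at hb ⊢; dsimp only [upperBlock] at hb ⊢; omega)
  rw [Fin.le_def] at this ⊢
  dsimp only [upperBlock]
  omega

theorem glue_lowerBlock_upperBlock (hk : k < N) (hP : IsParentFn (N + 1) P)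
    (hP' : CondP3 (N + 1) P) (hP0 : (P 0 : ℕ) = k + 1) :
    glue hk (lowerBlock hP' hP0) (upperBlock P k) = P := by
  funext i
  ext
  rcases glue_cases hk (lowerBlock hP' hP0) (upperBlock P k) i
    with ⟨hi, hgi⟩ | ⟨j, hjk, hij, hgi⟩ | ⟨j, hij, hgi⟩
  · obtain rfl : i = 0 := Fin.ext hi
    omega
  · have hPi : P ⟨j + 1, by omega⟩ = P i := congrArg P (Fin.ext hij.symm)
    have := hP.1 i (by omega)
    rw [hgi, lowerBlock_val hP' hP0 hjk, hPi]
    omega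
  · have hPi : P ⟨j + (k + 1), by omega⟩ = P i := congrArg P (Fin.ext hij.symm)
    have := hP.le_apply i
    rw [hgi, upperBlock, Fin.val_mk, hPi]
    omega

end Blocks

section Decomposition

variable {N : ℕ}

def glueSigma (x : Σ k : Fin N, P3ParentFn (k + 1) × P3ParentFn (N - k)) :
    P3ParentFn (N + 1) :=
  ⟨glue x.1.isLt x.2.1.1 x.2.2.1,
    isParentFn_glue _ x.2.1.2.1 x.2.2.2.1, condP3_glue _ x.2.1.2.2 x.2.2.2.2⟩

theorem glueSigma_injective : Function.Injective (glueSigma (N := N)) := by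
  rintro ⟨k, Q, R⟩ ⟨k', Q', R'⟩ h
  obtain rfl : k = k' := Fin.ext <| by
    simpa [glueSigma, glue_val_zero] using congrArg (fun P => (P.1 0 : ℕ)) h
  obtain ⟨hQ, hR⟩ := eq_of_glue_eq k.isLt Q.2.1 Q'.2.1 (congrArg Subtype.val h)
  rw [Subtype.ext hQ, Subtype.ext (a1 := R) hR]

theorem glueSigma_surjective (hN : 0 < N) : Function.Surjective (glueSigma (N := N)) := by
  rintro ⟨P, hP, hP'⟩
  have hP0 : (P 0 : ℕ) = (P 0 - 1 : ℕ) + 1 := by have := hP.1 0 (by simp; omega); omega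
  have hk : (P 0 : ℕ) - 1 < N := by omega
  exact ⟨⟨⟨_, hk⟩, ⟨_, isParentFn_lowerBlock hP hP' hP0, condP3_lowerBlock hP' hP0⟩,
    ⟨_, isParentFn_upperBlock hP, condP3_upperBlock hP'⟩⟩,
    Subtype.ext (glue_lowerBlock_upperBlock hk hP hP' hP0)⟩

theorem card_p3ParentFn_succ (hN : 0 < N) :
    Nat.card (P3ParentFn (N + 1)) =
      ∑ k : Fin N, Nat.card (P3ParentFn (k + 1)) * Nat.card (P3ParentFn (N - k)) := by
  rw [← Nat.card_eq_of_bijective _ ⟨glueSigma_injective, glueSigma_surjective hN⟩,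
    Nat.card_sigma]
  simp only [Nat.card_prod]

end Decomposition

theorem card_p3ParentFn_one : Nat.card (P3ParentFn 1) = 1 :=
  Nat.card_eq_one_iff_unique.2
    ⟨inferInstance, ⟨⟨id, ⟨fun _ _ => by omega, fun _ _ => rfl⟩, fun _ _ _ _ => by omega⟩⟩⟩

theorem card_p3ParentFn_eq_catalan (n : ℕ) : Nat.card (P3ParentFn (n + 1)) = catalan n := by
  induction n using Nat.strong_induction_on with
  | _ n ih =>
    rcases n with _ | n
    · rw [card_p3ParentFn_one, catalan_zero]
    · rw [card_p3ParentFn_succ n.succ_pos, catalan_succ]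
      refine Finset.sum_congr rfl fun k _ => ?_
      rw [ih k (by omega), show n + 1 - k = n - k + 1 by omega, ih (n - k) (by omega)]

/-- The number of parent functions on `[N]` satisfying condition (P3) is the
`(N-1)`-st Catalan number `C_{N-1} = (1/N) * binom(2N-2, N-1)`. -/
theorem card_parentFn_eq_catalan (N : ℕ) (hN : 1 ≤ N) :
    Nat.card {P : Fin N → Fin N // IsParentFn N P ∧ CondP3 N P} = catalan (N - 1) ∧
    catalan (N - 1) = (2 * N - 2).choose (N - 1) / N := by
  obtain ⟨n, rfl⟩ := Nat.exists_eq_add_of_le' hN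
  refine ⟨card_p3ParentFn_eq_catalan n, ?_⟩
  rw [catalan_eq_centralBinom_div, Nat.centralBinom, show 2 * (n + 1) - 2 = 2 * n by omega,
    Nat.add_sub_cancel]
end

section
/- For every density ρ₀ with m = ∫_0^1 ρ₀(x) dx < 1, every sorting plan ρ₀, ρ₁, …, ρ_n for ρ₀ has total cost Σ_{i=0}^{n−1} C(ρ_i, ρ_{i+1}) ≥ V(1−m). -/
open MeasureTheory
open scoped ENNReal

/-- A density: a measurable function `ρ : [0,1] → {0,1}` (modeled as a
function on `ℝ`; only the values on `[0,1]` are relevant). -/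
def IsDensity (ρ : ℝ → ℝ) : Prop :=
  Measurable ρ ∧ ∀ x ∈ Set.Icc (0 : ℝ) 1, ρ x = 0 ∨ ρ x = 1

/-- `ρ₀` is `κ`-mixed at scale `ε`:
`κε ≤ ∫_y^{y+ε} ρ₀ ≤ (1-κ)ε` for every `y ∈ [0, 1-ε]`. -/
def IsMixed (κ ε : ℝ) (ρ₀ : ℝ → ℝ) : Prop :=
  ∀ y : ℝ, 0 ≤ y → y ≤ 1 - ε →
    κ * ε ≤ (∫ x in y..(y + ε), ρ₀ x) ∧ (∫ x in y..(y + ε), ρ₀ x) ≤ (1 - κ) * ε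

/-- `ρ'` is obtained from `ρ` by an elementary operation of cost `c = a + b`:
for some `y ∈ [0,1)` and `a, b > 0` with `y + a + b ≤ 1`, a.e. `ρ = 1` on
`(y, y+a)`, `ρ = 0` on `(y+a, y+a+b)`, `ρ' = 0` on `(y, y+b)`, `ρ' = 1` on
`(y+b, y+a+b)`, and `ρ' = ρ` on `[0,1]` outside `(y, y+a+b)`. -/
def ElemOp (ρ ρ' : ℝ → ℝ) (c : ℝ) : Prop :=
  ∃ y a b : ℝ, 0 ≤ y ∧ y < 1 ∧ 0 < a ∧ 0 < b ∧ y + a + b ≤ 1 ∧ c = a + b ∧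
    (∀ᵐ x : ℝ, x ∈ Set.Ioo y (y + a) → ρ x = 1) ∧
    (∀ᵐ x : ℝ, x ∈ Set.Ioo (y + a) (y + a + b) → ρ x = 0) ∧
    (∀ᵐ x : ℝ, x ∈ Set.Ioo y (y + b) → ρ' x = 0) ∧
    (∀ᵐ x : ℝ, x ∈ Set.Ioo (y + b) (y + a + b) → ρ' x = 1) ∧
    (∀ᵐ x : ℝ, x ∈ Set.Icc (0 : ℝ) 1 → x ∉ Set.Ioo y (y + a + b) → ρ' x = ρ x)

/-- A sorting plan `ρ₀, ρ₁, …, ρ_n` for `ρ₀`, with cost `cost k` for the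
elementary operation from `ρ_k` to `ρ_{k+1}`: each `ρ_k` is a density,
`ρ_{k+1}` is obtained from `ρ_k` by an elementary operation, and `ρ_n`
coincides a.e. on `[0,1]` with the indicator of `(1 - m, 1)`, where
`m = ∫_0^1 ρ₀`. -/
def SortingPlan (ρ₀ : ℝ → ℝ) (n : ℕ) (ρ : ℕ → ℝ → ℝ) (cost : ℕ → ℝ) : Prop :=
  ρ 0 = ρ₀ ∧ (∀ k, k ≤ n → IsDensity (ρ k)) ∧
  (∀ k, k < n → ElemOp (ρ k) (ρ (k + 1)) (cost k)) ∧
  (∀ᵐ x : ℝ, x ∈ Set.Icc (0 : ℝ) 1 →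
    ρ n x = Set.indicator (Set.Ioo (1 - ∫ t in (0 : ℝ)..1, ρ₀ t) 1) (fun _ => (1 : ℝ)) x)

/-- `V(s)` (for the initial density `ρ₀`): the infimum, in `ℝ≥0∞`, of total
costs of finite sequences of densities starting at `ρ₀`, each obtained from the
previous by an elementary operation, whose final density vanishes a.e. on some
subinterval of `[0,1]` of length at least `s`; `V(s) = +∞` if no such sequence
exists. -/
noncomputable def V (ρ₀ : ℝ → ℝ) (s : ℝ) : ℝ≥0∞ :=
  sInf {c : ℝ≥0∞ | ∃ (k : ℕ) (ρ : ℕ → ℝ → ℝ) (cost : ℕ → ℝ),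
    ρ 0 = ρ₀ ∧ (∀ j, j ≤ k → IsDensity (ρ j)) ∧
    (∀ j, j < k → ElemOp (ρ j) (ρ (j + 1)) (cost j)) ∧
    (∃ y : ℝ, 0 ≤ y ∧ y + s ≤ 1 ∧ ∀ᵐ x : ℝ, x ∈ Set.Ioo y (y + s) → ρ k x = 0) ∧
    c = ENNReal.ofReal (∑ j ∈ Finset.range k, cost j)}

/-- For every density `ρ₀` with `m = ∫_0^1 ρ₀ < 1`, every sorting plan for
`ρ₀` has total cost at least `V(1 - m)`. -/
theorem sortingPlan_cost_ge_V (ρ₀ : ℝ → ℝ) (hρ : IsDensity ρ₀)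
    (hm : (∫ x in (0 : ℝ)..1, ρ₀ x) < 1)
    (n : ℕ) (ρ : ℕ → ℝ → ℝ) (cost : ℕ → ℝ) (hplan : SortingPlan ρ₀ n ρ cost) :
    V ρ₀ (1 - ∫ x in (0 : ℝ)..1, ρ₀ x) ≤
      ENNReal.ofReal (∑ i ∈ Finset.range n, cost i) := by
  obtain ⟨h0, hdens, hops, hfin⟩ := hplan
  set m := ∫ x in (0 : ℝ)..1, ρ₀ x with hmdef
  have hm0 : 0 ≤ m := by
    apply intervalIntegral.integral_nonneg (by norm_num)
    intro u hu
    rcases hρ.2 u hu with h | h <;> simp [h]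
  apply sInf_le
  refine ⟨n, ρ, cost, h0, hdens, hops, ⟨0, le_refl 0, by linarith, ?_⟩, rfl⟩
  filter_upwards [hfin] with x hx hx'
  have hx1 : x ∈ Set.Icc (0 : ℝ) 1 := by
    constructor
    · exact le_of_lt hx'.1
    · have := hx'.2; simp only [zero_add] at this; linarith
  rw [hx hx1, Set.indicator_of_notMem]
  intro hmem
  have := hx'.2
  simp only [zero_add] at this
  exact absurd hmem.1 (by linarith)
end

section
/- If the density ρ₀ is κ-mixed at scale ε, then for every s with ε ≤ s ≤ 1 − κ·ε·⌊1/ε⌋, one has V(s) ≥ s − ε. -/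
open MeasureTheory
open scoped ENNReal

/-- If `ρ₀` is `κ`-mixed at scale `ε`, then for every `s` with
`ε ≤ s ≤ 1 - κ·ε·⌊1/ε⌋`, one has `V(s) ≥ s - ε`. -/
theorem V_ge_sub (κ ε : ℝ) (hκ0 : 0 < κ) (hκ1 : κ < 1) (hε0 : 0 < ε) (hε1 : ε < 1)
    (ρ₀ : ℝ → ℝ) (hρ : IsDensity ρ₀) (hmix : IsMixed κ ε ρ₀)
    (s : ℝ) (hs1 : ε ≤ s) (hs2 : s ≤ 1 - κ * ε * (⌊1 / ε⌋₊ : ℝ)) :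
    ENNReal.ofReal (s - ε) ≤ V ρ₀ s := by
  refine le_sInf ?_
  rintro c ⟨k, ρ, cost, hρ0, hdens, hstep, ⟨y, hy0, hys, hvoid⟩, rfl⟩
  have hcostpos : ∀ j, j < k → 0 < cost j := by
    intro j hj
    obtain ⟨y0, a, b, _, _, ha, hb, _, hceq, _⟩ := hstep j hj
    rw [hceq]; linarith
  have key : ∀ j, j ≤ k → ∀ z ℓ : ℝ, 0 ≤ z → z + ℓ ≤ 1 →
      (∀ᵐ x : ℝ, x ∈ Set.Ioo z (z + ℓ) → ρ j x = 0) →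
      ℓ ≤ ε + ∑ i ∈ Finset.range j, cost i := by
    intro j
    induction j with
    | zero =>
      intro _ z ℓ hz hzl hv
      simp only [Finset.range_zero, Finset.sum_empty, add_zero]
      by_contra hcon
      push_neg at hcon
      rw [hρ0] at hv
      have hz1 : z ≤ 1 - ε := by linarith
      have hint := (hmix z hz hz1).1
      have hne : ∀ᵐ x : ℝ, x ≠ z + ε := by
        simp [ae_iff, Real.volume_singleton]
      have hcongr : ∀ᵐ x : ℝ, x ∈ Set.uIoc z (z + ε) → ρ₀ x = 0 := by
        filter_upwards [hv, hne] with x hx hxne hmem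
        rw [Set.uIoc_of_le (by linarith : z ≤ z + ε)] at hmem
        have hxe : x < z + ε := lt_of_le_of_ne hmem.2 hxne
        exact hx ⟨hmem.1, by linarith⟩
      have hzero : (∫ x in z..(z + ε), ρ₀ x) = 0 := by
        rw [intervalIntegral.integral_congr_ae hcongr]
        simp
      nlinarith [mul_pos hκ0 hε0]
    | succ n ih =>
      intro hj z ℓ hz hzl hv
      have hnk : n < k := hj
      have hnle : n ≤ k := hnk.le
      obtain ⟨y0, a, b, hy00, hy01, ha, hb, hsum1, hceq, h1, h2, h3, h4, h5⟩ := hstep n hnk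
      have hsnn : 0 ≤ ∑ i ∈ Finset.range n, cost i :=
        Finset.sum_nonneg fun i hi => (hcostpos i ((Finset.mem_range.mp hi).trans hnk)).le
      rw [Finset.sum_range_succ, hceq]
      by_cases hcase1 : ℓ ≤ a + b
      · linarith
      push_neg at hcase1
      by_cases hcase2 : z + ℓ ≤ y0 + b
      · by_cases hcase3 : z + ℓ ≤ y0
        · have hv' : ∀ᵐ x : ℝ, x ∈ Set.Ioo z (z + ℓ) → ρ n x = 0 := by
            filter_upwards [hv, h5] with x hx h5x hmem
            have hIcc : x ∈ Set.Icc (0 : ℝ) 1 := ⟨le_of_lt (lt_of_le_of_lt hz hmem.1), by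
              have := hmem.2; linarith⟩
            have hnot : x ∉ Set.Ioo y0 (y0 + a + b) := by
              intro hco
              have := hmem.2
              have := hco.1
              linarith
            rw [← h5x hIcc hnot]
            exact hx hmem
          have := ih hnle z ℓ hz hzl hv'
          linarith
        · push_neg at hcase3
          have hv' : ∀ᵐ x : ℝ, x ∈ Set.Ioo z (z + (y0 - z)) → ρ n x = 0 := by
            filter_upwards [hv, h5] with x hx h5x hmem
            have hxy0 : x < y0 := by have := hmem.2; linarith
            have hIcc : x ∈ Set.Icc (0 : ℝ) 1 := ⟨le_of_lt (lt_of_le_of_lt hz hmem.1),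
              le_of_lt (lt_trans hxy0 hy01)⟩
            have hnot : x ∉ Set.Ioo y0 (y0 + a + b) := by
              intro hco
              have := hco.1
              linarith
            rw [← h5x hIcc hnot]
            exact hx ⟨hmem.1, by linarith⟩
          have := ih hnle z (y0 - z) hz (by linarith) hv'
          linarith
      · push_neg at hcase2
        by_cases hcase4 : y0 + a + b ≤ z
        · have hv' : ∀ᵐ x : ℝ, x ∈ Set.Ioo z (z + ℓ) → ρ n x = 0 := by
            filter_upwards [hv, h5] with x hx h5x hmem
            have hIcc : x ∈ Set.Icc (0 : ℝ) 1 := ⟨le_of_lt (lt_of_le_of_lt hz hmem.1), by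
              have := hmem.2; linarith⟩
            have hnot : x ∉ Set.Ioo y0 (y0 + a + b) := by
              intro hco
              have := hco.2
              have := hmem.1
              linarith
            rw [← h5x hIcc hnot]
            exact hx hmem
          have := ih hnle z ℓ hz hzl hv'
          linarith
        · push_neg at hcase4
          exfalso
          set M := max z (y0 + b) with hM
          set m := min (z + ℓ) (y0 + a + b) with hm
          have hMm : M < m :=
            max_lt (lt_min (by linarith) (by linarith)) (lt_min hcase2 (by linarith))
          have hae : ∀ᵐ x : ℝ, (x ∈ Set.Ioo z (z + ℓ) → ρ (n + 1) x = 0) ∧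
              (x ∈ Set.Ioo (y0 + b) (y0 + a + b) → ρ (n + 1) x = 1) := hv.and h4
          have hsub : Set.Ioo M m ⊆ {x : ℝ | ¬ ((x ∈ Set.Ioo z (z + ℓ) → ρ (n + 1) x = 0) ∧
              (x ∈ Set.Ioo (y0 + b) (y0 + a + b) → ρ (n + 1) x = 1))} := by
            intro x hx hP
            have e0 := hP.1 ⟨(le_max_left z (y0 + b)).trans_lt hx.1,
              hx.2.trans_le (min_le_left _ _)⟩
            have e1 := hP.2 ⟨(le_max_right z (y0 + b)).trans_lt hx.1,
              hx.2.trans_le (min_le_right _ _)⟩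
            rw [e0] at e1
            norm_num at e1
          have hzero : volume (Set.Ioo M m) = 0 :=
            measure_mono_null hsub (ae_iff.mp hae)
          rw [Real.volume_Ioo] at hzero
          have := ENNReal.ofReal_eq_zero.mp hzero
          linarith
  have hkey := key k le_rfl y s hy0 hys hvoid
  exact ENNReal.ofReal_le_ofReal (by linarith)
end
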